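/- Let K = ⟨T,A⟩ be a DL-Lite_core^bag ontology, C a concept, and a an individual. Then the bag answer at a of the CQ q_C(x) = ζ_C(x) over the canonical bag model C(K) equals the bag answer at a of the max-union query η_C(x) = ⋁_{T ⊨ C₀ ⊑ C} ζ_{C₀}(x) over the canonical bag model C(⟨∅,A⟩) of the ontology with empty TBox and bag ABox A. -/

import Mathlib

/-!
Common formalization of the bag semantics of DL-Lite ontologies
(Nikolaou et al., "The Bag Semantics of Ontology-Based Data Access").
-/

open scoped Classical

noncomputable section

/-- Individuals (constants). -/
abbrev Ind : Type := ℕ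
/-- Variables. -/
abbrev Var : Type := ℕ
/-- Atomic concepts (unary predicates). -/
abbrev AtomicConcept : Type := ℕ
/-- Atomic roles (binary predicates). -/
abbrev AtomicRole : Type := ℕ

/-- A role is an atomic role or its inverse. -/
inductive Role where
  | atomic : AtomicRole → Role
  | inv : AtomicRole → Role
  deriving DecidableEq

/-- A concept is an atomic concept or `∃R` for a role `R`. -/
inductive DLConcept where
  | atomic : AtomicConcept → DLConcept
  | ex : Role → DLConcept
  deriving DecidableEq

/-- TBox axioms: inclusions and disjointness axioms between concepts or roles. -/
inductive TBoxAxiom where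
  | cIncl : DLConcept → DLConcept → TBoxAxiom
  | rIncl : Role → Role → TBoxAxiom
  | cDisj : DLConcept → DLConcept → TBoxAxiom
  | rDisj : Role → Role → TBoxAxiom
  deriving DecidableEq

/-- A DL-Lite_R TBox: a finite set of TBox axioms. -/
abbrev TBox : Type := Finset TBoxAxiom

/-- A DL-Lite_core TBox: only concept inclusions and concept disjointness axioms. -/
def TBox.IsCore (T : TBox) : Prop :=
  ∀ ax ∈ T, (∃ C D, ax = TBoxAxiom.cIncl C D) ∨ (∃ C D, ax = TBoxAxiom.cDisj C D)

/-- ABox assertions. -/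
inductive Assertion where
  | conceptA : AtomicConcept → Ind → Assertion
  | roleA : AtomicRole → Ind → Ind → Assertion
  deriving DecidableEq

/-- A bag ABox: a finite bag of assertions (represented as a multiset). -/
abbrev BagABox : Type := Multiset Assertion

/-- Multiplicity of an assertion in a bag ABox, as an extended natural. -/
def BagABox.mult (A : BagABox) (s : Assertion) : ℕ∞ := (A.count s : ℕ∞)

/-- Sum of an arbitrary family of extended naturals. -/
def bagSum {α : Type*} (f : α → ℕ∞) : ℕ∞ := ⨆ s : Finset α, ∑ x ∈ s, f x

/-- A bag interpretation. -/
structure BagInterp : Type 1 where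
  Δ : Type
  dne : Nonempty Δ
  indMap : Ind → Δ
  indInj : Function.Injective indMap
  cI : AtomicConcept → Δ → ℕ∞
  rI : AtomicRole → Δ → Δ → ℕ∞

/-- Extension of the interpretation function to roles. -/
def BagInterp.roleMult (I : BagInterp) : Role → I.Δ → I.Δ → ℕ∞
  | Role.atomic P => fun u v => I.rI P u v
  | Role.inv P => fun u v => I.rI P v u

/-- Extension of the interpretation function to concepts. -/
def BagInterp.conceptMult (I : BagInterp) : DLConcept → I.Δ → ℕ∞
  | DLConcept.atomic A => fun u => I.cI A u
  | DLConcept.ex R => fun u => bagSum (fun v => I.roleMult R u v)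

/-- Multiplicity of an assertion in a bag interpretation. -/
def BagInterp.assertMult (I : BagInterp) : Assertion → ℕ∞
  | Assertion.conceptA A a => I.cI A (I.indMap a)
  | Assertion.roleA P a b => I.rI P (I.indMap a) (I.indMap b)

/-- Satisfaction of a TBox axiom by a bag interpretation. -/
def BagInterp.SatisfiesAx (I : BagInterp) : TBoxAxiom → Prop
  | TBoxAxiom.cIncl C D => ∀ u, I.conceptMult C u ≤ I.conceptMult D u
  | TBoxAxiom.rIncl R S => ∀ u v, I.roleMult R u v ≤ I.roleMult S u v
  | TBoxAxiom.cDisj C D => ∀ u, min (I.conceptMult C u) (I.conceptMult D u) = 0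
  | TBoxAxiom.rDisj R S => ∀ u v, min (I.roleMult R u v) (I.roleMult S u v) = 0

/-- A DL-Lite^bag ontology. -/
structure Ontology : Type where
  tbox : TBox
  abox : BagABox

/-- `I` is a bag model of the ontology `K`. -/
def BagInterp.IsModel (I : BagInterp) (K : Ontology) : Prop :=
  (∀ ax ∈ K.tbox, I.SatisfiesAx ax) ∧
  ∀ s : Assertion, BagABox.mult K.abox s ≤ I.assertMult s

/-- Satisfiability of an ontology under bag semantics. -/
def Ontology.Satisfiable (K : Ontology) : Prop := ∃ I : BagInterp, I.IsModel K

/- ## Conjunctive queries -/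

/-- Terms: variables or individuals. -/
inductive Term where
  | var : Var → Term
  | ind : Ind → Term
  deriving DecidableEq

def Term.varsOf : Term → List Var
  | Term.var v => [v]
  | Term.ind _ => []

def Term.indsOf : Term → List Ind
  | Term.var _ => []
  | Term.ind a => [a]

/-- Query atoms: concept atoms, role atoms, and equalities. -/
inductive QAtom where
  | conceptAt : AtomicConcept → Term → QAtom
  | roleAt : AtomicRole → Term → Term → QAtom
  | eqAt : Var → Term → QAtom
  deriving DecidableEq

def QAtom.terms : QAtom → List Term
  | QAtom.conceptAt _ t => [t]
  | QAtom.roleAt _ t₁ t₂ => [t₁, t₂]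
  | QAtom.eqAt z t => [Term.var z, t]

def QAtom.vars : QAtom → List Var
  | QAtom.conceptAt _ t => t.varsOf
  | QAtom.roleAt _ t₁ t₂ => t₁.varsOf ++ t₂.varsOf
  | QAtom.eqAt z t => z :: t.varsOf

/-- A conjunctive query `q(x) = ∃y. φ(x,y)`: a tuple of answer variables,
a tuple of existential variables, and a conjunction (list, i.e. allowing
repetitions) of atoms. -/
structure CQ : Type where
  answerVars : List Var
  existVars : List Var
  atoms : List QAtom

def CQ.vars (q : CQ) : List Var := q.answerVars ++ q.existVars

/-- Value of a term under a valuation of the variables. -/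
def termVal (I : BagInterp) (f : Var → I.Δ) : Term → I.Δ
  | Term.var v => f v
  | Term.ind a => I.indMap a

/-- Multiplicity contributed by an atom under a valuation: for predicate atoms the
multiplicity of the image tuple, for equalities the indicator of satisfaction. -/
def QAtom.mult (I : BagInterp) (f : Var → I.Δ) : QAtom → ℕ∞
  | QAtom.conceptAt A t => I.cI A (termVal I f t)
  | QAtom.roleAt P t₁ t₂ => I.rI P (termVal I f t₁) (termVal I f t₂)
  | QAtom.eqAt z t => if f z = termVal I f t then 1 else 0

/-- The bag answers `q^I(ā)`: the sum, over all valuations of the variables of `q`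
mapping the answer variables to `ā` (valuations are normalized to a fixed junk
value outside the variables of `q`), of the product of the multiplicities of the
atom occurrences of `q`. -/
def CQ.bagAnswer (q : CQ) (I : BagInterp) (a : List Ind) : ℕ∞ :=
  bagSum (fun f : {f : Var → I.Δ //
      (∀ v, v ∉ q.vars → f v = I.indMap 0) ∧
      q.answerVars.map f = a.map I.indMap} =>
    (q.atoms.map (QAtom.mult I f.1)).prod)

/-- Bag certain answers: pointwise minimum over all bag models. -/
def bagCertain (K : Ontology) (q : CQ) (a : List Ind) : ℕ∞ :=
  ⨅ (I : BagInterp) (_ : I.IsModel K), q.bagAnswer I a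

/-- Base relation of the equivalence relation generated by the equality atoms. -/
def CQ.eqBase (q : CQ) : Term → Term → Prop := fun t₁ t₂ =>
  ∃ z t, QAtom.eqAt z t ∈ q.atoms ∧ t₁ = Term.var z ∧ t₂ = t

/-- Equivalence of terms generated by the equality atoms of `q`. -/
def CQ.eqRel (q : CQ) : Term → Term → Prop := Relation.EqvGen q.eqBase

/-- Safety: the class of every variable contains a term occurring in a
non-equality atom. -/
def CQ.Safe (q : CQ) : Prop :=
  ∀ v ∈ q.vars, ∃ t : Term, ∃ atm ∈ q.atoms,
    (∀ z s, atm ≠ QAtom.eqAt z s) ∧ t ∈ QAtom.terms atm ∧ q.eqRel (Term.var v) t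

/-- Well-formedness of CQs: repetition-free disjoint tuples of variables, all
variables of the atoms among the declared variables, and safety. -/
def CQ.WellFormed (q : CQ) : Prop :=
  q.answerVars.Nodup ∧ q.existVars.Nodup ∧
  (∀ v ∈ q.answerVars, v ∉ q.existVars) ∧
  (∀ atm ∈ q.atoms, ∀ v ∈ QAtom.vars atm, v ∈ q.vars) ∧
  q.Safe

def CQ.mentionsTerm (q : CQ) (t : Term) : Prop := ∃ atm ∈ q.atoms, t ∈ QAtom.terms atm

/-- Adjacency in the Gaifman graph of `q` (on terms; equality atoms merge the
classes of their two terms, which for connectivity purposes is the same as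
making them adjacent). -/
def CQ.gaifmanAdj (q : CQ) : Term → Term → Prop := fun t₁ t₂ =>
  ∃ atm ∈ q.atoms, t₁ ∈ QAtom.terms atm ∧ t₂ ∈ QAtom.terms atm

/-- A CQ is rooted if every connected component of its Gaifman graph contains
an answer variable or an individual. -/
def CQ.Rooted (q : CQ) : Prop :=
  ∀ t : Term, q.mentionsTerm t →
    ∃ t' : Term, Relation.ReflTransGen q.gaifmanAdj t t' ∧
      ((∃ v ∈ q.answerVars, t' = Term.var v) ∨ ∃ a : Ind, t' = Term.ind a)

/- ## Set semantics -/

/-- A classical (set) interpretation. -/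
structure SetInterp : Type 1 where
  Δ : Type
  dne : Nonempty Δ
  indMap : Ind → Δ
  indInj : Function.Injective indMap
  cI : AtomicConcept → Set Δ
  rI : AtomicRole → Set (Δ × Δ)

def SetInterp.roleSet (I : SetInterp) : Role → Set (I.Δ × I.Δ)
  | Role.atomic P => I.rI P
  | Role.inv P => {p | (p.2, p.1) ∈ I.rI P}

def SetInterp.conceptSet (I : SetInterp) : DLConcept → Set I.Δ
  | DLConcept.atomic A => I.cI A
  | DLConcept.ex R => {u | ∃ v, (u, v) ∈ I.roleSet R}

def SetInterp.SatisfiesAx (I : SetInterp) : TBoxAxiom → Prop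
  | TBoxAxiom.cIncl C D => I.conceptSet C ⊆ I.conceptSet D
  | TBoxAxiom.rIncl R S => I.roleSet R ⊆ I.roleSet S
  | TBoxAxiom.cDisj C D => I.conceptSet C ∩ I.conceptSet D = ∅
  | TBoxAxiom.rDisj R S => I.roleSet R ∩ I.roleSet S = ∅

def SetInterp.SatisfiesAssertion (I : SetInterp) : Assertion → Prop
  | Assertion.conceptA A a => I.indMap a ∈ I.cI A
  | Assertion.roleA P a b => (I.indMap a, I.indMap b) ∈ I.rI P

/-- `I` is a (set) model of the TBox `T` and the set ABox `A`. -/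
def SetInterp.IsModelOf (I : SetInterp) (T : TBox) (A : Finset Assertion) : Prop :=
  (∀ ax ∈ T, I.SatisfiesAx ax) ∧ ∀ s ∈ A, I.SatisfiesAssertion s

def setTermVal (I : SetInterp) (f : Var → I.Δ) : Term → I.Δ
  | Term.var v => f v
  | Term.ind a => I.indMap a

def SetInterp.SatAtom (I : SetInterp) (f : Var → I.Δ) : QAtom → Prop
  | QAtom.conceptAt A t => setTermVal I f t ∈ I.cI A
  | QAtom.roleAt P t₁ t₂ => (setTermVal I f t₁, setTermVal I f t₂) ∈ I.rI P
  | QAtom.eqAt z t => f z = setTermVal I f t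

/-- `q(ā)` holds in the set interpretation `I`. -/
def SetInterp.SatCQ (I : SetInterp) (q : CQ) (a : List Ind) : Prop :=
  ∃ f : Var → I.Δ, q.answerVars.map f = a.map I.indMap ∧ ∀ atm ∈ q.atoms, I.SatAtom f atm

/-- Entailment of a concept inclusion from a TBox (standard set semantics). -/
def TBox.EntailsCI (T : TBox) (C D : DLConcept) : Prop :=
  ∀ I : SetInterp, (∀ ax ∈ T, I.SatisfiesAx ax) → I.conceptSet C ⊆ I.conceptSet D

/- ## The canonical bag model -/

/-- Domain elements of the canonical model: individuals and anonymous elements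
`w^j_{u,R}`. -/
inductive CanElem where
  | ind : Ind → CanElem
  | anon : CanElem → Role → ℕ → CanElem
  deriving DecidableEq

def CanElem.isAnon : CanElem → Prop
  | CanElem.ind _ => False
  | CanElem.anon _ _ _ => True

/-- A stage of the canonical-model construction: a set of active elements and
bag interpretations of the predicates. -/
structure PreInterp : Type where
  active : Set CanElem
  c : AtomicConcept → CanElem → ℕ∞
  r : AtomicRole → CanElem → CanElem → ℕ∞

def PreInterp.toInterp (P : PreInterp) : BagInterp where
  Δ := CanElem
  dne := ⟨CanElem.ind 0⟩
  indMap := CanElem.ind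
  indInj := fun a b h => by cases h; rfl
  cI := P.c
  rI := P.r

/-- Concept closure: `ccl(u,I,T)(C)` is the supremum of `C₀^I(u)` over all
concepts `C₀` with `T ⊨ C₀ ⊑ C`. -/
def cclI (T : TBox) (I : BagInterp) (C : DLConcept) (u : I.Δ) : ℕ∞ :=
  ⨆ C₀ : {C₀ : DLConcept // TBox.EntailsCI T C₀ C}, I.conceptMult C₀.1 u

def PreInterp.ccl (P : PreInterp) (T : TBox) (u : CanElem) (C : DLConcept) : ℕ∞ :=
  cclI T P.toInterp C u

/-- `δ = ccl(u,C_{i-1},T)(∃R) − (∃R)^{C_{i-1}}(u)` (truncated subtraction). -/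
def PreInterp.delta (P : PreInterp) (T : TBox) (u : CanElem) (R : Role) : ℕ∞ :=
  P.ccl T u (DLConcept.ex R) - P.toInterp.conceptMult (DLConcept.ex R) u

/-- The anonymous elements freshly added when stepping from `P`. -/
def PreInterp.NewAnon (P : PreInterp) (T : TBox) (w : CanElem) : Prop :=
  ∃ u R j, w = CanElem.anon u R j ∧ u ∈ P.active ∧ (j : ℕ∞) < P.delta T u R

/-- One step of the canonical-model construction. -/
def PreInterp.step (P : PreInterp) (T : TBox) : PreInterp where
  active := P.active ∪ {w | P.NewAnon T w}
  c := fun A u => if u ∈ P.active then P.ccl T u (DLConcept.atomic A) else 0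
  r := fun P₀ u v =>
    if u ∈ P.active ∧ v ∈ P.active then P.r P₀ u v
    else if ∃ j, v = CanElem.anon u (Role.atomic P₀) j ∧ P.NewAnon T v then 1
    else if ∃ j, u = CanElem.anon v (Role.inv P₀) j ∧ P.NewAnon T u then 1
    else 0

/-- The stages `C_i(K)` of the canonical bag model. -/
def canStage (K : Ontology) : ℕ → PreInterp
  | 0 =>
    { active := Set.range CanElem.ind
      c := fun A u =>
        match u with
        | CanElem.ind a => BagABox.mult K.abox (Assertion.conceptA A a)
        | _ => 0
      r := fun P u v =>
        match u, v with
        | CanElem.ind a, CanElem.ind b => BagABox.mult K.abox (Assertion.roleA P a b)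
        | _, _ => 0 }
  | (i + 1) => (canStage K i).step K.tbox

/-- The canonical bag model `C(K) = ⋃_{i ≥ 0} C_i(K)` (pointwise maximum). -/
def canInterp (K : Ontology) : BagInterp where
  Δ := CanElem
  dne := ⟨CanElem.ind 0⟩
  indMap := CanElem.ind
  indInj := fun a b h => by cases h; rfl
  cI := fun A u => ⨆ i, (canStage K i).c A u
  rI := fun P u v => ⨆ i, (canStage K i).r P u v

/-- The canonical bag model `C(⟨∅,A⟩)` of the ontology with empty TBox:
individuals as domain, every predicate interpreted by its ABox bag. -/
def emptyCanInterp (A : BagABox) : BagInterp where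
  Δ := Ind
  dne := ⟨0⟩
  indMap := id
  indInj := fun _ _ h => h
  cI := fun C a => BagABox.mult A (Assertion.conceptA C a)
  rI := fun P a b => BagABox.mult A (Assertion.roleA P a b)

/-- `[q,z]^{C(K)}`: bag answers over the canonical model computed only over
valuations sending the variables of `z` to anonymous elements and the remaining
existential variables to individuals. -/
def CQ.restrictedAnswer (q : CQ) (K : Ontology) (z : Finset Var) (a : List Ind) : ℕ∞ :=
  bagSum (fun f : {f : Var → CanElem //
      (∀ v, v ∉ q.vars → f v = CanElem.ind 0) ∧
      q.answerVars.map f = a.map CanElem.ind ∧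
      ∀ v ∈ q.existVars, (v ∈ z → CanElem.isAnon (f v)) ∧ (v ∉ z → ∃ b : Ind, f v = CanElem.ind b)} =>
    (q.atoms.map (QAtom.mult (canInterp K) f.1)).prod)

/- ## Ma-connected subsets, realisability, and the per-`z` rewritten query -/

/-- `t` is a variable belonging to `z`. -/
def Term.IsZVar (t : Term) (z : Finset Var) : Prop := ∃ v ∈ z, t = Term.var v

/-- Adjacency in the Gaifman graph restricted to nodes that are variables of `z`. -/
def CQ.zAdj (q : CQ) (z : Finset Var) : Term → Term → Prop := fun t₁ t₂ =>
  q.gaifmanAdj t₁ t₂ ∧ t₁.IsZVar z ∧ t₂.IsZVar z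

/-- `z'` is maximally connected in the anonymous part (ma-connected) within `z`. -/
def CQ.MAConnected (q : CQ) (z z' : Finset Var) : Prop :=
  z' ⊆ z ∧
  (∀ v ∈ z', ∀ w ∈ z, Relation.ReflTransGen (q.zAdj z) (Term.var v) (Term.var w) → w ∈ z') ∧
  (∀ v ∈ z', ∀ w ∈ z', Relation.ReflTransGen (q.zAdj z) (Term.var v) (Term.var w))

/-- `φ_{z'}`: the subconjunction of all atoms of `q` mentioning a variable of `z'`. -/
def CQ.subAtoms (q : CQ) (z' : Finset Var) : List QAtom :=
  q.atoms.filter (fun atm => decide (∃ v ∈ z', v ∈ QAtom.vars atm))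

def termsOfList (l : List QAtom) : List Term :=
  l.foldr (fun atm acc => QAtom.terms atm ++ acc) []

/-- `t_{z'}`: all terms occurring in `φ_{z'}` that are not variables of `z`. -/
def CQ.tTerms (q : CQ) (z z' : Finset Var) : List Term :=
  (termsOfList (q.subAtoms z')).filter (fun t => decide (¬ t.IsZVar z))

/-- `atm` is a legitimate choice of `α_{z'}`: an atom of `φ_{z'}` of the form
`P(t,z)` or `P(z,t)` with `z ∈ z'` and the term `t` not a variable of `z`. -/
def IsAlphaFor (q : CQ) (z z' : Finset Var) (atm : QAtom) : Prop :=
  atm ∈ q.subAtoms z' ∧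
  ((∃ P t v, v ∈ z' ∧ ¬ Term.IsZVar t z ∧ atm = QAtom.roleAt P t (Term.var v)) ∨
   (∃ P t v, v ∈ z' ∧ ¬ Term.IsZVar t z ∧ atm = QAtom.roleAt P (Term.var v) t))

def CQ.inds (q : CQ) : List Ind :=
  (termsOfList q.atoms).foldr (fun t acc => t.indsOf ++ acc) []

def CQ.maxInd (q : CQ) : Ind := q.inds.foldr max 0

/-- The individual `a` of `q^a_{z'}`: the individual among `t_{z'}` if one
exists, and a fresh individual otherwise. -/
def freshA (q : CQ) (z z' : Finset Var) : Ind :=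
  if h : ∃ c : Ind, Term.ind c ∈ q.tTerms z z' then h.choose else q.maxInd + 1

/-- A fresh individual `b` (distinct from `freshA`). -/
def freshB (q : CQ) : Ind := q.maxInd + 2

/-- The one-assertion bag ABox `A'` used to test realisability: `{P(a,b)}` if
`α_{z'} = P(t,z)` and `{P(b,a)}` if `α_{z'} = P(z,t)`. -/
def alphaABox (z' : Finset Var) (atm : QAtom) (a b : Ind) : BagABox :=
  match atm with
  | QAtom.roleAt P _ t₂ =>
      if Term.IsZVar t₂ z' then {Assertion.roleA P a b} else {Assertion.roleA P b a}
  | _ => 0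

def subVars (q : CQ) (z' : Finset Var) : List Var :=
  (q.subAtoms z').foldr (fun atm acc => QAtom.vars atm ++ acc) []

/-- The bag answer `(q^a_{z'})^{C(⟨T,A'⟩)}(⟨⟩)` of the Boolean query
`q^a_{z'}() = ∃x'.∃z'. φ_{z'} ∧ ⋀_{t ∈ t_{z'}}(t = a) ∧ ⋀_{z ∈ z'}(z ≠ a)`
over the canonical model of `⟨T,A'⟩`. -/
def realQAnswer (T : TBox) (q : CQ) (z z' : Finset Var) (atm : QAtom) : ℕ∞ :=
  bagSum (fun f : {f : Var → CanElem //
      (∀ v, v ∉ subVars q z' → f v = CanElem.ind 0) ∧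
      (∀ t ∈ q.tTerms z z',
        termVal (canInterp ⟨T, alphaABox z' atm (freshA q z z') (freshB q)⟩) f t
          = CanElem.ind (freshA q z z')) ∧
      ∀ v ∈ z', f v ≠ CanElem.ind (freshA q z z')} =>
    ((q.subAtoms z').map
      (QAtom.mult (canInterp ⟨T, alphaABox z' atm (freshA q z z') (freshB q)⟩) f.1)).prod)

/-- Equality-consistency of `z`: no equality atom `z = t` with `z ∈ z` and `t ∉ z`. -/
def EqConsistent (q : CQ) (z : Finset Var) : Prop :=
  ∀ v t, QAtom.eqAt v t ∈ q.atoms → v ∈ z → Term.IsZVar t z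

/-- The ma-connected subset `z'` is realisable by `T` (w.r.t. the chosen `α_{z'}`). -/
def RealisableMA (T : TBox) (q : CQ) (z z' : Finset Var) (atm : QAtom) : Prop :=
  1 ≤ realQAnswer T q z z' atm

/-- `z` is realisable by `T`: equality-consistent and every nonempty
ma-connected subset of `z` is realisable. -/
def RealisableZ (T : TBox) (q : CQ) (z : Finset Var) (alpha : Finset Var → QAtom) : Prop :=
  EqConsistent q z ∧
  ∀ z' : Finset Var, q.MAConnected z z' → z'.Nonempty → RealisableMA T q z z' (alpha z')

/-- The nonempty ma-connected subsets of `z`. -/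
def maSets (q : CQ) (z : Finset Var) : Finset (Finset Var) :=
  z.powerset.filter (fun z' => q.MAConnected z z' ∧ z'.Nonempty)

def tTermVars (q : CQ) (z z' : Finset Var) : List Var :=
  (q.tTerms z z').foldr (fun t acc => Term.varsOf t ++ acc) []

/-- The equalities identifying all the terms of `t_{z'}`. -/
def eqAtomsFor (q : CQ) (z z' : Finset Var) : List QAtom :=
  (tTermVars q z z').foldr
    (fun v acc => ((q.tTerms z z').map (fun t => QAtom.eqAt v t)) ++ acc) []

/-- Atoms of `q_z`: the atoms of `q` not mentioning a variable of `z`, plus,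
for each nonempty ma-connected `z' ⊆ z`, the atom `α_{z'}` together with the
equalities identifying the terms of `t_{z'}`. -/
def qzAtoms (q : CQ) (z : Finset Var) (alpha : Finset Var → QAtom) : List QAtom :=
  q.atoms.filter (fun atm => decide (¬ ∃ v ∈ z, v ∈ QAtom.vars atm))
    ++ (maSets q z).toList.foldr (fun z' acc => alpha z' :: (eqAtomsFor q z z' ++ acc)) []

/-- The CQ `q_z(x) = ∃y'. φ_z(x,y')`. -/
def qz (q : CQ) (z : Finset Var) (alpha : Finset Var → QAtom) : CQ where
  answerVars := q.answerVars
  existVars := q.existVars.filter (fun v => decide (∃ atm ∈ qzAtoms q z alpha, v ∈ QAtom.vars atm))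
  atoms := qzAtoms q z alpha

/- ## The BALG rewriting `q̄` -/

/-- Value of an atom of `q_z` after the rewriting step 3 (`chasing back'' with
the TBox): concept atoms `A(t)` become `⋁_{T ⊨ C ⊑ A} ζ_C(t)`, role atoms with a
`z`-variable become the corresponding truncated difference, and the remaining
atoms are evaluated as before. -/
def rewAtomVal (T : TBox) (I : BagInterp) (z : Finset Var) (f : Var → I.Δ) : QAtom → ℕ∞
  | QAtom.conceptAt A t => cclI T I (DLConcept.atomic A) (termVal I f t)
  | QAtom.roleAt P t₁ t₂ =>
      if Term.IsZVar t₂ z then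
        cclI T I (DLConcept.ex (Role.atomic P)) (termVal I f t₁)
          - I.conceptMult (DLConcept.ex (Role.atomic P)) (termVal I f t₁)
      else if Term.IsZVar t₁ z then
        cclI T I (DLConcept.ex (Role.inv P)) (termVal I f t₂)
          - I.conceptMult (DLConcept.ex (Role.inv P)) (termVal I f t₂)
      else I.rI P (termVal I f t₁) (termVal I f t₂)
  | QAtom.eqAt v t => if f v = termVal I f t then 1 else 0

/-- Bag answers of the BALG query `q̄_z`, obtained from `q_z` by projecting only
the variables of `y' ∖ z` and replacing atoms as in `rewAtomVal`. -/
def rewAnswer (T : TBox) (qq : CQ) (z : Finset Var) (I : BagInterp) (a : List Ind) : ℕ∞ :=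
  bagSum (fun f : {f : Var → I.Δ //
      (∀ v, v ∉ qq.answerVars ++ qq.existVars.filter (fun u => decide (u ∉ z)) →
        f v = I.indMap 0) ∧
      qq.answerVars.map f = a.map I.indMap} =>
    (qq.atoms.map (rewAtomVal T I z f.1)).prod)

/- ## BALG¹_ε queries -/

def Term.fvars (t : Term) : Finset Var :=
  match t with
  | Term.var v => {v}
  | Term.ind _ => ∅

/-- Syntax of BALG¹_ε queries. -/
inductive BQuery where
  | atomC : AtomicConcept → Term → BQuery
  | atomR : AtomicRole → Term → Term → BQuery
  | conj : BQuery → BQuery → BQuery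
  | eqSel : BQuery → Var → Term → BQuery
  | proj : List Var → BQuery → BQuery
  | maxU : BQuery → BQuery → BQuery
  | arithU : BQuery → BQuery → BQuery
  | diff : BQuery → BQuery → BQuery

/-- Answer variables of a BALG¹_ε query. -/
def BQuery.fv : BQuery → Finset Var
  | BQuery.atomC _ t => t.fvars
  | BQuery.atomR _ t₁ t₂ => t₁.fvars ∪ t₂.fvars
  | BQuery.conj q₁ q₂ => q₁.fv ∪ q₂.fv
  | BQuery.eqSel q _ t => q.fv ∪ t.fvars
  | BQuery.proj ys q => q.fv \ ys.toFinset
  | BQuery.maxU q₁ _ => q₁.fv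
  | BQuery.arithU q₁ _ => q₁.fv
  | BQuery.diff q₁ _ => q₁.fv

/-- Well-formedness of BALG¹_ε queries. -/
def BQuery.WF : BQuery → Prop
  | BQuery.atomC _ _ => True
  | BQuery.atomR _ _ _ => True
  | BQuery.conj q₁ q₂ => q₁.WF ∧ q₂.WF
  | BQuery.eqSel q x _ => q.WF ∧ x ∈ q.fv
  | BQuery.proj _ q => q.WF
  | BQuery.maxU q₁ q₂ => q₁.WF ∧ q₂.WF ∧ q₁.fv = q₂.fv
  | BQuery.arithU q₁ q₂ => q₁.WF ∧ q₂.WF ∧ q₁.fv = q₂.fv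
  | BQuery.diff q₁ q₂ => q₁.WF ∧ q₂.WF ∧ q₁.fv = q₂.fv

/-- Semantics of BALG¹_ε queries under a valuation of the answer variables. -/
def BQuery.val (I : BagInterp) : BQuery → (Var → I.Δ) → ℕ∞
  | BQuery.atomC A t, f => I.cI A (termVal I f t)
  | BQuery.atomR P t₁ t₂, f => I.rI P (termVal I f t₁) (termVal I f t₂)
  | BQuery.conj q₁ q₂, f => q₁.val I f * q₂.val I f
  | BQuery.eqSel q x t, f => if f x = termVal I f t then q.val I f else 0
  | BQuery.proj ys q, f => bagSum (fun g : {g : Var → I.Δ // ∀ v, v ∉ ys → g v = f v} => q.val I g.1)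
  | BQuery.maxU q₁ q₂, f => max (q₁.val I f) (q₂.val I f)
  | BQuery.arithU q₁ q₂, f => q₁.val I f + q₂.val I f
  | BQuery.diff q₁ q₂, f => q₁.val I f - q₂.val I f

/-- Bag answers of a BALG¹_ε query with answer variables `xs` on a tuple `a`. -/
def BQuery.answer (Q : BQuery) (xs : List Var) (I : BagInterp) (a : List Ind) : ℕ∞ :=
  if a.length = xs.length then Q.val I (fun v => I.indMap (a.getD (xs.idxOf v) 0)) else 0

/- ## Enumerated bags, e-homomorphisms, and e-valuations -/

/-- Enumerated copies of a bag of domain elements (for an atomic concept). -/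
def EBagC (I : BagInterp) (A : AtomicConcept) : Type :=
  {p : I.Δ × ℕ // 1 ≤ p.2 ∧ (p.2 : ℕ∞) ≤ I.cI A p.1}

/-- Enumerated copies of a bag of pairs (for an atomic role). -/
def EBagR (I : BagInterp) (P : AtomicRole) : Type :=
  {p : (I.Δ × I.Δ) × ℕ // 1 ≤ p.2 ∧ (p.2 : ℕ∞) ≤ I.rI P p.1.1 p.1.2}

/-- An e-homomorphism between the enumerated versions of two bag interpretations. -/
structure EHom (I J : BagInterp) where
  h : I.Δ → J.Δ
  hInd : ∀ a : Ind, h (I.indMap a) = J.indMap a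
  hC : ∀ A : AtomicConcept, EBagC I A → EBagC J A
  hC_fst : ∀ (A : AtomicConcept) (x : EBagC I A), (hC A x).1.1 = h x.1.1
  hR : ∀ P : AtomicRole, EBagR I P → EBagR J P
  hR_fst : ∀ (P : AtomicRole) (x : EBagR I P), (hR P x).1.1 = (h x.1.1.1, h x.1.1.2)

/-- Predicate-injectivity on individuals of an e-homomorphism. -/
def EHom.PredInj {I J : BagInterp} (e : EHom I J) : Prop :=
  ∀ u : I.Δ, (∃ a : Ind, e.h u = J.indMap a) →
    (∀ A : AtomicConcept, ∀ x y : EBagC I A,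
      x.1.1 = u → y.1.1 = u → x.1.2 ≠ y.1.2 → e.hC A x ≠ e.hC A y) ∧
    (∀ P : AtomicRole, ∀ x y : EBagR I P, x.1.1.1 = u → y.1.1.1 = u →
      (x.1.1.2, x.1.2) ≠ (y.1.1.2, y.1.2) → e.hR P x ≠ e.hR P y) ∧
    (∀ P : AtomicRole, ∀ x y : EBagR I P, x.1.1.2 = u → y.1.1.2 = u →
      (x.1.1.1, x.1.2) ≠ (y.1.1.1, y.1.2) → e.hR P x ≠ e.hR P y)

/-- Enumerated atoms of a CQ (seen as a bag of atoms). -/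
def EAtom (q : CQ) : Type := {p : QAtom × ℕ // 1 ≤ p.2 ∧ p.2 ≤ q.atoms.count p.1}

/-- An e-valuation of the enumerated query `q^e` over the enumerated
interpretation `I^e`. -/
structure EVal (q : CQ) (I : BagInterp) where
  ν : Var → I.Δ
  hjunk : ∀ v, v ∉ q.vars → ν v = I.indMap 0
  heq : ∀ z t, QAtom.eqAt z t ∈ q.atoms → ν z = termVal I ν t
  ℓ : EAtom q → ℕ
  hone : ∀ e : EAtom q, 1 ≤ ℓ e
  hconcept : ∀ (e : EAtom q) (A : AtomicConcept) (t : Term),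
    e.1.1 = QAtom.conceptAt A t → (ℓ e : ℕ∞) ≤ I.cI A (termVal I ν t)
  hrole : ∀ (e : EAtom q) (P : AtomicRole) (t₁ t₂ : Term),
    e.1.1 = QAtom.roleAt P t₁ t₂ → (ℓ e : ℕ∞) ≤ I.rI P (termVal I ν t₁) (termVal I ν t₂)
  heqm : ∀ (e : EAtom q) (z : Var) (t : Term), e.1.1 = QAtom.eqAt z t → ℓ e = 1

/-- The tuple of domain elements to which an e-atom is sent by an e-valuation. -/
def EVal.imgTerms {q : CQ} {I : BagInterp} (ev : EVal q I) (e : EAtom q) : List I.Δ :=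
  (QAtom.terms e.1.1).map (termVal I ev.ν)

/-- The enumerated image of an e-atom under an e-valuation. -/
def EVal.img {q : CQ} {I : BagInterp} (ev : EVal q I) (e : EAtom q) : List I.Δ × ℕ :=
  (ev.imgTerms e, ev.ℓ e)

/- ## Auxiliary concrete queries -/

/-- The CQ `ζ_C(x)`: `A(x)`, `∃y.P(x,y)` or `∃y.P(y,x)`. -/
def zetaCQ : DLConcept → CQ
  | DLConcept.atomic A => ⟨[0], [], [QAtom.conceptAt A (Term.var 0)]⟩
  | DLConcept.ex (Role.atomic P) => ⟨[0], [1], [QAtom.roleAt P (Term.var 0) (Term.var 1)]⟩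
  | DLConcept.ex (Role.inv P) => ⟨[0], [1], [QAtom.roleAt P (Term.var 1) (Term.var 0)]⟩

/-- The CQ `q(x) = R(x,x)`. -/
def selfCQ (P : AtomicRole) : CQ := ⟨[0], [], [QAtom.roleAt P (Term.var 0) (Term.var 0)]⟩

/-!
At an individual `a`, the query `ζ_C` counts exactly `C^I(a)`. In the canonical model the
individuals are saturated at stage one: atomic concepts receive their closure `ccl`, and each
`∃R` receives `δ` fresh `R`-successors, which tops it up to its closure. As the closure is
idempotent, `δ` vanishes at individuals from then on, so `C^{C(K)}(a) = ccl(a, C₀(K), T)(C)`,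
the max union over `C₀ ⊑ C` of `C₀^{C(⟨∅,A⟩)}(a)`.
-/

section BagSum

variable {α β : Type*}

lemma le_bagSum (f : α → ℕ∞) (s : Finset α) : ∑ x ∈ s, f x ≤ bagSum f :=
  le_iSup (fun s : Finset α => ∑ x ∈ s, f x) s

lemma bagSum_mono {f g : α → ℕ∞} (h : ∀ x, f x ≤ g x) : bagSum f ≤ bagSum g :=
  iSup_mono fun _ => Finset.sum_le_sum fun x _ => h x

lemma bagSum_comp_of_injective {g : α → β} (hg : Function.Injective g) (f : β → ℕ∞)
    (hf : ∀ b, b ∉ Set.range g → f b = 0) : bagSum (fun x => f (g x)) = bagSum f := by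
  refine le_antisymm (iSup_le fun s => ?_) (iSup_le fun t => ?_)
  · exact (Finset.sum_map s ⟨g, hg⟩ f).symm.trans_le (le_bagSum f _)
  · rw [← Finset.sum_preimage g t hg.injOn f fun x _ hx => hf x hx]
    exact le_bagSum _ _

lemma bagSum_eq_of_forall_eq (f : α → ℕ∞) {x₀ : α} (h : ∀ x, x = x₀) : bagSum f = f x₀ := by
  refine le_antisymm (iSup_le fun s => ?_) (le_iSup_of_le {x₀} (by simp))
  calc ∑ x ∈ s, f x ≤ ∑ x ∈ {x₀}, f x := Finset.sum_le_sum_of_subset fun x _ => by simp [h x]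
    _ = f x₀ := Finset.sum_singleton _ _

lemma bagSum_add (f g : α → ℕ∞) : bagSum (fun x => f x + g x) = bagSum f + bagSum g := by
  unfold bagSum
  rw [ENat.iSup_add_iSup fun s t => ⟨s ∪ t, add_le_add
    (Finset.sum_le_sum_of_subset Finset.subset_union_left)
    (Finset.sum_le_sum_of_subset Finset.subset_union_right)⟩]
  simp only [Finset.sum_add_distrib]

lemma bagSum_iSup_of_monotone {f : ℕ → α → ℕ∞} (hf : ∀ x, Monotone fun i => f i x) :
    bagSum (fun x => ⨆ i, f i x) = ⨆ i, bagSum (f i) := by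
  refine le_antisymm (iSup_le fun s => ?_)
    (iSup_le fun i => bagSum_mono fun x => le_iSup_of_le i le_rfl)
  rw [ENat.sum_iSup_of_monotone hf]
  exact iSup_mono fun i => le_bagSum _ _

lemma bagSum_ite_lt (δ : ℕ∞) : bagSum (fun j : ℕ => if (j : ℕ∞) < δ then 1 else 0) = δ := by
  refine le_antisymm (iSup_le fun s => ?_) (ENat.forall_natCast_le_iff_le.1 fun n hn => ?_)
  · rw [Finset.sum_boole]
    induction δ using ENat.recTopCoe with
    | top => exact le_top
    | coe m =>
      have hsub : s.filter (fun j : ℕ => (j : ℕ∞) < m) ⊆ Finset.range m := fun j hj => by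
        simpa using (Finset.mem_filter.1 hj).2
      exact_mod_cast (Finset.card_le_card hsub).trans (Finset.card_range m).le
  · refine le_trans ?_ (le_bagSum _ (Finset.range n))
    rw [Finset.sum_boole, Finset.filter_true_of_mem fun j hj =>
      (Nat.cast_lt.2 (Finset.mem_range.1 hj)).trans_le hn, Finset.card_range]

end BagSum

section Zeta

lemma zetaCQ_answerVars (C : DLConcept) : (zetaCQ C).answerVars = [0] := by
  rcases C with _ | (_ | _) <;> rfl

lemma zetaCQ_vars_ex (R : Role) : (zetaCQ (DLConcept.ex R)).vars = [0, 1] := by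
  cases R <;> rfl

lemma mem_zetaCQ_vars {C : DLConcept} {w : Var} (hw : w ∈ (zetaCQ C).vars) : w = 0 ∨ w = 1 := by
  rcases C with _ | (_ | _) <;> simp_all [zetaCQ, CQ.vars]

/-- Variables other than `x = 0` and `y = 1` go to the junk value `I.indMap 0`, as in
`CQ.bagAnswer`. -/
def zetaVal (I : BagInterp) (a : Ind) (v : I.Δ) : Var → I.Δ :=
  fun w => if w = 0 then I.indMap a else if w = 1 then v else I.indMap 0

lemma eq_zetaVal_of_valuation {I : BagInterp} {C : DLConcept} {a : Ind} {f : Var → I.Δ}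
    (hjunk : ∀ v, v ∉ (zetaCQ C).vars → f v = I.indMap 0)
    (hans : (zetaCQ C).answerVars.map f = [a].map I.indMap) : f = zetaVal I a (f 1) := by
  funext w
  rw [zetaCQ_answerVars] at hans
  by_cases h0 : w = 0
  · subst h0
    simpa [zetaVal] using hans
  by_cases h1 : w = 1
  · simp [zetaVal, h1]
  · simp only [zetaVal, h0, h1, if_false]
    exact hjunk w fun hw => (mem_zetaCQ_vars hw).elim h0 h1

lemma bagAnswer_zetaCQ (I : BagInterp) (C : DLConcept) (a : Ind) :
    (zetaCQ C).bagAnswer I [a] = I.conceptMult C (I.indMap a) := by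
  cases C with
  | atomic A =>
    have hval : (∀ v, v ∉ (zetaCQ (DLConcept.atomic A)).vars →
          zetaVal I a (I.indMap 0) v = I.indMap 0) ∧
        (zetaCQ (DLConcept.atomic A)).answerVars.map (zetaVal I a (I.indMap 0)) =
          [a].map I.indMap :=
      ⟨fun v _ => by by_cases h : v = 0 <;> simp_all [zetaVal, zetaCQ, CQ.vars],
        by simp [zetaVal, zetaCQ]⟩
    rw [CQ.bagAnswer, bagSum_eq_of_forall_eq _ (x₀ := ⟨_, hval⟩)]
    · simp [zetaCQ, QAtom.mult, termVal, zetaVal, BagInterp.conceptMult]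
    · rintro ⟨f, hjunk, hans⟩
      have h1 : f 1 = I.indMap 0 := hjunk 1 (by simp [zetaCQ, CQ.vars])
      exact Subtype.ext ((eq_zetaVal_of_valuation hjunk hans).trans (by rw [h1]))
  | ex R =>
    let g : I.Δ → {f : Var → I.Δ //
        (∀ v, v ∉ (zetaCQ (DLConcept.ex R)).vars → f v = I.indMap 0) ∧
        (zetaCQ (DLConcept.ex R)).answerVars.map f = [a].map I.indMap} := fun v =>
      ⟨zetaVal I a v, fun w hw => by
          have : w ≠ 0 ∧ w ≠ 1 := by simpa [zetaCQ_vars_ex] using hw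
          simp [zetaVal, this.1, this.2],
        by simp [zetaCQ_answerVars, zetaVal]⟩
    have hg : Function.Injective g := fun u v h => by
      simpa [g, zetaVal] using congrFun (congrArg Subtype.val h) 1
    have hsurj : ∀ f, f ∈ Set.range g := fun ⟨f, hjunk, hans⟩ =>
      ⟨f 1, Subtype.ext (eq_zetaVal_of_valuation hjunk hans).symm⟩
    rw [CQ.bagAnswer, ← bagSum_comp_of_injective hg _ fun f hf => (hf (hsurj f)).elim]
    cases R <;> simp [g, zetaCQ, QAtom.mult, termVal, zetaVal, BagInterp.conceptMult,
      BagInterp.roleMult]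

end Zeta

section Closure

variable {T : TBox} {I : BagInterp}

lemma conceptMult_le_cclI_of_entails {C₀ C : DLConcept} (h : T.EntailsCI C₀ C) (u : I.Δ) :
    I.conceptMult C₀ u ≤ cclI T I C u :=
  le_iSup_of_le ⟨C₀, h⟩ le_rfl

lemma conceptMult_le_cclI (C : DLConcept) (u : I.Δ) : I.conceptMult C u ≤ cclI T I C u :=
  conceptMult_le_cclI_of_entails (fun _ _ => subset_rfl) u

lemma cclI_mono_of_entails {C D : DLConcept} (h : T.EntailsCI C D) (u : I.Δ) :
    cclI T I C u ≤ cclI T I D u :=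
  iSup_le fun C₀ => conceptMult_le_cclI_of_entails (fun J hJ => (C₀.2 J hJ).trans (h J hJ)) u

/-- Idempotence of the concept closure. -/
lemma cclI_eq_of_forall_conceptMult_eq {J : BagInterp} {u : I.Δ} {v : J.Δ}
    (h : ∀ D, J.conceptMult D v = cclI T I D u) (C : DLConcept) :
    cclI T J C v = cclI T I C u := by
  refine le_antisymm (iSup_le fun C₀ => ?_) (iSup_le fun C₀ => ?_)
  · rw [h]
    exact cclI_mono_of_entails C₀.2 u
  · calc I.conceptMult C₀ u ≤ cclI T I C₀ u := conceptMult_le_cclI C₀ u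
      _ = J.conceptMult C₀ v := (h C₀).symm
      _ ≤ cclI T J C v := conceptMult_le_cclI_of_entails C₀.2 v

end Closure

namespace PreInterp

variable {P : PreInterp} {T : TBox}

lemma newAnon_anon_iff {u : CanElem} {R : Role} {j : ℕ} :
    P.NewAnon T (CanElem.anon u R j) ↔ u ∈ P.active ∧ (j : ℕ∞) < P.delta T u R := by
  constructor
  · rintro ⟨u', R', j', h, hu, hj⟩
    obtain ⟨rfl, rfl, rfl⟩ := CanElem.anon.inj h
    exact ⟨hu, hj⟩
  · rintro ⟨hu, hj⟩
    exact ⟨u, R, j, rfl, hu, hj⟩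

lemma not_newAnon_ind (a : Ind) : ¬ P.NewAnon T (CanElem.ind a) := by
  rintro ⟨u, R, j, h, -⟩
  cases h

lemma active_subset_step : P.active ⊆ (P.step T).active := Set.subset_union_left

def RoleSupported (P : PreInterp) : Prop :=
  ∀ Q u v, P.r Q u v ≠ 0 → u ∈ P.active ∧ v ∈ P.active

lemma roleSupported_step : (P.step T).RoleSupported := by
  intro Q u v h
  simp only [PreInterp.step, ne_eq] at h
  split_ifs at h with h₁ h₂ h₃
  · exact ⟨active_subset_step h₁.1, active_subset_step h₁.2⟩
  · obtain ⟨j, rfl, hnew⟩ := h₂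
    exact ⟨active_subset_step (newAnon_anon_iff.1 hnew).1, Or.inr hnew⟩
  · obtain ⟨j, rfl, hnew⟩ := h₃
    exact ⟨Or.inr hnew, active_subset_step (newAnon_anon_iff.1 hnew).1⟩
  · exact absurd rfl h

lemma RoleSupported.r_le_step (hP : P.RoleSupported) (Q : AtomicRole) (u v : CanElem) :
    P.r Q u v ≤ (P.step T).r Q u v := by
  by_cases h : P.r Q u v = 0
  · rw [h]
    exact zero_le
  · simp only [PreInterp.step, if_pos (hP Q u v h), le_rfl]

lemma RoleSupported.roleMult_eq_zero (hP : P.RoleSupported) (R : Role) (u : CanElem)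
    {v : CanElem} (hv : v ∉ P.active) : P.toInterp.roleMult R u v = 0 := by
  by_contra h
  cases R with
  | atomic Q => exact hv (hP Q u v h).2
  | inv Q => exact hv (hP Q v u h).1

lemma step_roleMult_ind {a : Ind} (ha : CanElem.ind a ∈ P.active) (R : Role) (v : CanElem) :
    (P.step T).toInterp.roleMult R (CanElem.ind a) v =
      if v ∈ P.active then P.toInterp.roleMult R (CanElem.ind a) v
      else if ∃ j : ℕ, v = CanElem.anon (CanElem.ind a) R j ∧
          (j : ℕ∞) < P.delta T (CanElem.ind a) R then 1 else 0 := by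
  have hnew : ∀ R, (∃ j, v = CanElem.anon (CanElem.ind a) R j ∧ P.NewAnon T v) ↔
      ∃ j : ℕ, v = CanElem.anon (CanElem.ind a) R j ∧ (j : ℕ∞) < P.delta T (CanElem.ind a) R :=
    fun R => exists_congr fun j => and_congr_right fun hv => by
      rw [hv, newAnon_anon_iff, and_iff_right ha]
  cases R <;>
  · simp only [toInterp, BagInterp.roleMult, step, ha, true_and, and_true, hnew]
    split_ifs <;> simp_all [not_newAnon_ind]

lemma conceptMult_step_ind (hP : P.RoleSupported) {a : Ind} (ha : CanElem.ind a ∈ P.active)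
    (hfresh : ∀ R (j : ℕ), (j : ℕ∞) < P.delta T (CanElem.ind a) R →
      CanElem.anon (CanElem.ind a) R j ∉ P.active)
    (C : DLConcept) :
    (P.step T).toInterp.conceptMult C (CanElem.ind a) = P.ccl T (CanElem.ind a) C := by
  cases C with
  | atomic A => simp [toInterp, BagInterp.conceptMult, step, ha]
  | ex R =>
    set δ := P.delta T (CanElem.ind a) R
    let fresh : CanElem → ℕ∞ := fun v =>
      if ∃ j : ℕ, v = CanElem.anon (CanElem.ind a) R j ∧ (j : ℕ∞) < δ then 1 else 0
    have hpt : ∀ v : CanElem, (P.step T).toInterp.roleMult R (CanElem.ind a) v =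
        P.toInterp.roleMult R (CanElem.ind a) v + fresh v := by
      intro v
      rw [step_roleMult_ind ha]
      by_cases hv : v ∈ P.active
      · have : ¬ ∃ j : ℕ, v = CanElem.anon (CanElem.ind a) R j ∧ (j : ℕ∞) < δ := by
          rintro ⟨j, rfl, hj⟩
          exact hfresh R j hj hv
        simp [hv, fresh, this]
      · simp only [hv, if_false, hP.roleMult_eq_zero R _ hv, zero_add, fresh, δ]
    have hsum : bagSum fresh = δ := by
      rw [← bagSum_comp_of_injective (g := fun j : ℕ => CanElem.anon (CanElem.ind a) R j)
        (fun j k h => (CanElem.anon.inj h).2.2) fresh]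
      · simpa [fresh] using bagSum_ite_lt δ
      · intro v hv
        refine if_neg ?_
        rintro ⟨j, rfl, -⟩
        exact hv ⟨j, rfl⟩
    calc (P.step T).toInterp.conceptMult (DLConcept.ex R) (CanElem.ind a)
        = bagSum fun v => P.toInterp.roleMult R (CanElem.ind a) v + fresh v :=
          congrArg bagSum (funext hpt)
      _ = P.toInterp.conceptMult (DLConcept.ex R) (CanElem.ind a) + δ :=
          (bagSum_add _ fresh).trans (congrArg _ hsum)
      _ = P.ccl T (CanElem.ind a) (DLConcept.ex R) :=
          add_tsub_cancel_of_le (conceptMult_le_cclI _ _)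

end PreInterp

section CanonicalModel

variable (K : Ontology)

lemma ind_mem_canStage_active : ∀ (i : ℕ) (a : Ind), CanElem.ind a ∈ (canStage K i).active
  | 0, a => ⟨a, rfl⟩
  | i + 1, a => PreInterp.active_subset_step (ind_mem_canStage_active i a)

lemma canStage_roleSupported : ∀ i : ℕ, (canStage K i).RoleSupported
  | 0 => fun Q u v h => by
    cases u <;> cases v <;> first | exact ⟨⟨_, rfl⟩, ⟨_, rfl⟩⟩ | exact absurd rfl h
  | _ + 1 => PreInterp.roleSupported_step

lemma monotone_canStage_r (Q : AtomicRole) (u v : CanElem) :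
    Monotone fun i => (canStage K i).r Q u v :=
  monotone_nat_of_le_succ fun i => (canStage_roleSupported K i).r_le_step Q u v

lemma conceptMult_canInterp (C : DLConcept) (u : CanElem) :
    (canInterp K).conceptMult C u = ⨆ i, (canStage K i).toInterp.conceptMult C u := by
  cases C with
  | atomic A => rfl
  | ex R =>
    cases R with
    | atomic Q => exact bagSum_iSup_of_monotone fun v => monotone_canStage_r K Q u v
    | inv Q => exact bagSum_iSup_of_monotone fun v => monotone_canStage_r K Q v u

lemma conceptMult_canStage_succ_ind : ∀ (i : ℕ) (C : DLConcept) (a : Ind),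
    (canStage K (i + 1)).toInterp.conceptMult C (CanElem.ind a) =
      cclI K.tbox (canStage K 0).toInterp C (CanElem.ind a)
  | 0, C, a => by
    refine PreInterp.conceptMult_step_ind (canStage_roleSupported K 0)
      (ind_mem_canStage_active K 0 a) (fun R j _ => ?_) C
    rintro ⟨b, hb⟩
    cases hb
  | i + 1, C, a => by
    have hccl : ∀ D, (canStage K (i + 1)).ccl K.tbox (CanElem.ind a) D =
        cclI K.tbox (canStage K 0).toInterp D (CanElem.ind a) :=
      cclI_eq_of_forall_conceptMult_eq (conceptMult_canStage_succ_ind i · a)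
    have hδ : ∀ R, (canStage K (i + 1)).delta K.tbox (CanElem.ind a) R = 0 := fun R => by
      rw [PreInterp.delta, hccl, conceptMult_canStage_succ_ind i, tsub_self]
    rw [← hccl]
    refine PreInterp.conceptMult_step_ind (canStage_roleSupported K (i + 1))
      (ind_mem_canStage_active K (i + 1) a) (fun R j hj => ?_) C
    rw [hδ] at hj
    exact absurd hj not_lt_zero

lemma conceptMult_canInterp_ind (C : DLConcept) (a : Ind) :
    (canInterp K).conceptMult C (CanElem.ind a) =
      cclI K.tbox (canStage K 0).toInterp C (CanElem.ind a) := by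
  rw [conceptMult_canInterp]
  refine le_antisymm (iSup_le ?_) (le_iSup_of_le 1 (conceptMult_canStage_succ_ind K 0 C a).ge)
  rintro (_ | i)
  · exact conceptMult_le_cclI C _
  · exact (conceptMult_canStage_succ_ind K i C a).le

lemma conceptMult_emptyCanInterp (C : DLConcept) (a : Ind) :
    (emptyCanInterp K.abox).conceptMult C a =
      (canStage K 0).toInterp.conceptMult C (CanElem.ind a) := by
  have hind : Function.Injective CanElem.ind := fun _ _ h => by cases h; rfl
  have hanon : ∀ f : CanElem → ℕ∞, (∀ w R j, f (CanElem.anon w R j) = 0) →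
      ∀ v, v ∉ Set.range CanElem.ind → f v = 0 := by
    rintro f hf (b | ⟨w, R, j⟩) hv
    · exact absurd ⟨b, rfl⟩ hv
    · exact hf w R j
  rcases C with A | (Q | Q)
  · rfl
  · exact bagSum_comp_of_injective hind (fun v => (canStage K 0).r Q (CanElem.ind a) v)
      (hanon _ fun _ _ _ => rfl)
  · exact bagSum_comp_of_injective hind (fun v => (canStage K 0).r Q v (CanElem.ind a))
      (hanon _ fun _ _ _ => rfl)

end CanonicalModel

theorem statement_17_general (K : Ontology) (C : DLConcept) (a : Ind) :
    (zetaCQ C).bagAnswer (canInterp K) [a]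
      = ⨆ C₀ : {C₀ : DLConcept // TBox.EntailsCI K.tbox C₀ C},
          (zetaCQ C₀.1).bagAnswer (emptyCanInterp K.abox) [a] := by
  rw [bagAnswer_zetaCQ]
  refine (conceptMult_canInterp_ind K C a).trans (iSup_congr fun C₀ => ?_)
  rw [bagAnswer_zetaCQ]
  exact (conceptMult_emptyCanInterp K C₀ a).symm

/-- For a DL-Lite_core^bag ontology `K = ⟨T,A⟩`, a concept `C`
and an individual `a`: the bag answer at `a` of the CQ `q_C(x) = ζ_C(x)` over
the canonical model `C(K)` equals the bag answer at `a` of the max-union query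
`η_C(x) = ⋁_{T ⊨ C₀ ⊑ C} ζ_{C₀}(x)` over `C(⟨∅,A⟩)`. -/
theorem statement_17 (K : Ontology) (hcore : TBox.IsCore K.tbox)
    (C : DLConcept) (a : Ind) :
    (zetaCQ C).bagAnswer (canInterp K) [a]
      = ⨆ C₀ : {C₀ : DLConcept // TBox.EntailsCI K.tbox C₀ C},
          (zetaCQ C₀.1).bagAnswer (emptyCanInterp K.abox) [a] :=
  statement_17_general K C a
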